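/- Let K be a field and let I ⊂ K[x,y] be a lexsegment ideal. Then μ(I^2) = 2μ(I) − 1. -/

import Mathlib

open MvPolynomial

/-- The minimal number of generators of an ideal. -/
noncomputable def mu {R : Type*} [CommRing R] (I : Ideal R) : ℕ :=
  sInf {m : ℕ | ∃ s : Finset R, s.card = m ∧ Ideal.span (s : Set R) = I}

/-- A monomial ideal: an ideal generated by monomials. -/
def IsMonomialIdeal {K : Type*} [Field K] {n : ℕ} (I : Ideal (MvPolynomial (Fin n) K)) : Prop :=
  ∃ S : Set (Fin n →₀ ℕ), I = Ideal.span ((fun v => monomial v (1 : K)) '' S)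

/-- A lexsegment ideal of `K[x,y]`: a monomial ideal such that for every monomial
`x^c y^d ∈ I` and every monomial `x^e y^f` of the same degree which is larger in the
lexicographic order with `x > y` (i.e. `e > c`), also `x^e y^f ∈ I`. -/
def IsLexsegmentIdeal {K : Type*} [Field K] (I : Ideal (MvPolynomial (Fin 2) K)) : Prop :=
  IsMonomialIdeal I ∧ ∀ c d e f : ℕ, c + d = e + f → c < e →
    (X 0 : MvPolynomial (Fin 2) K) ^ c * X 1 ^ d ∈ I →
    (X 0 : MvPolynomial (Fin 2) K) ^ e * X 1 ^ f ∈ I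

/-!
Let `J ≠ 0` be a strongly stable monomial ideal of `K[x,y]` (every lexsegment ideal is one), let
`k` be the least `x`-degree of a monomial of `J` and `x ^ A` the least pure power of `x` in `J`.
Its minimal monomial generators are `x ^ a * y ^ β(a)` for `k ≤ a ≤ A`, where `β(a)` is the
least `y`-degree over `x ^ a`: strong stability makes `β` strictly decreasing on `[k, A]`. The
minimal monomial generators of any monomial ideal form a minimal generating set, because the
coefficients of `p * f` (`f ∈ J`) at them are those of `f` scaled by the constant term of `p`.
Hence `μ(J) = A - k + 1`. Strong stability passes to products and both `k` and `A` are additive, so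
`μ(IJ) = μ(I) + μ(J) - 1`.
-/

open Pointwise

lemma mu_bot {R : Type*} [CommRing R] : mu (⊥ : Ideal R) = 0 :=
  Nat.eq_zero_of_le_zero <| Nat.sInf_le ⟨∅, rfl, by simp⟩

section MonomialIdeal

variable {K : Type*} [Field K]

lemma mu_le_card_of_span_monomial {σ : Type*} {J : Ideal (MvPolynomial σ K)}
    (G : Finset (σ →₀ ℕ)) (hG : Ideal.span ((fun v => monomial v (1 : K)) '' ↑G) = J) :
    mu J ≤ G.card := by
  classical
  refine Nat.sInf_le ⟨G.image fun v => monomial v (1 : K), ?_, by rwa [Finset.coe_image]⟩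
  exact Finset.card_image_of_injective _ (monomial_left_injective one_ne_zero)

lemma monomial_mem_of_le {σ : Type*} {J : Ideal (MvPolynomial σ K)} {u w : σ →₀ ℕ}
    (hu : monomial u (1 : K) ∈ J) (huw : u ≤ w) : monomial w (1 : K) ∈ J :=
  J.mem_of_dvd (monomial_dvd_monomial.mpr ⟨Or.inr huw, one_dvd _⟩) hu

variable {n : ℕ} {I J : Ideal (MvPolynomial (Fin n) K)}

lemma IsMonomialIdeal.monomial_mem_of_mem_support (hJ : IsMonomialIdeal J)
    {f : MvPolynomial (Fin n) K} (hf : f ∈ J) {v : Fin n →₀ ℕ} (hv : v ∈ f.support) :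
    monomial v (1 : K) ∈ J := by
  obtain ⟨S, rfl⟩ := hJ
  obtain ⟨s, hs, hsv⟩ := mem_ideal_span_monomial_image.mp hf v hv
  exact monomial_mem_of_le (Ideal.subset_span ⟨s, hs, rfl⟩) hsv

lemma IsMonomialIdeal.eq_span_monomial (hJ : IsMonomialIdeal J) :
    J = Ideal.span ((fun v => monomial v (1 : K)) '' {v | monomial v (1 : K) ∈ J}) := by
  refine le_antisymm (fun f hf => ?_) (Ideal.span_le.mpr ?_)
  · exact mem_ideal_span_monomial_image.mpr fun v hv =>
      ⟨v, hJ.monomial_mem_of_mem_support hf hv, le_rfl⟩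
  · rintro _ ⟨v, hv, rfl⟩
    exact hv

lemma IsMonomialIdeal.mul_eq_span_monomial (hI : IsMonomialIdeal I) (hJ : IsMonomialIdeal J) :
    I * J = Ideal.span ((fun v => monomial v (1 : K)) ''
      ({v | monomial v (1 : K) ∈ I} + {v | monomial v (1 : K) ∈ J})) := by
  conv_lhs => rw [hI.eq_span_monomial, hJ.eq_span_monomial]
  rw [Ideal.span_mul_span', ← Set.image2_mul, ← Set.image2_add, Set.image_image2]
  simp only [Set.image2_image_left, Set.image2_image_right, monomial_mul, one_mul]

lemma IsMonomialIdeal.mul (hI : IsMonomialIdeal I) (hJ : IsMonomialIdeal J) :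
    IsMonomialIdeal (I * J) :=
  ⟨_, hI.mul_eq_span_monomial hJ⟩

lemma IsMonomialIdeal.monomial_mem_mul_iff (hI : IsMonomialIdeal I) (hJ : IsMonomialIdeal J)
    {w : Fin n →₀ ℕ} :
    monomial w (1 : K) ∈ I * J ↔
      ∃ u v, monomial u (1 : K) ∈ I ∧ monomial v (1 : K) ∈ J ∧ u + v ≤ w := by
  rw [hI.mul_eq_span_monomial hJ, mem_ideal_span_monomial_image]
  simp [Set.mem_add]

lemma IsMonomialIdeal.coeff_mul_of_minimal (hJ : IsMonomialIdeal J)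
    {f : MvPolynomial (Fin n) K} (hf : f ∈ J) {g : Fin n →₀ ℕ}
    (hg : Minimal (fun v => monomial v (1 : K) ∈ J) g) (p : MvPolynomial (Fin n) K) :
    coeff g (p * f) = coeff 0 p * coeff g f := by
  classical
  rw [coeff_mul, Finset.sum_eq_single ((0 : Fin n →₀ ℕ), g)]
  · rintro ⟨u, v⟩ huv hne
    rw [Finset.HasAntidiagonal.mem_antidiagonal] at huv
    by_cases hv : coeff v f = 0
    · rw [hv, mul_zero]
    · have hvg : v = g := hg.eq_of_le (hJ.monomial_mem_of_mem_support hf (mem_support_iff.mpr hv))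
        (huv ▸ le_add_self)
      subst hvg
      exact absurd (by simpa using huv) hne
  · simp

lemma IsMonomialIdeal.card_le_mu (hJ : IsMonomialIdeal J) (G : Finset (Fin n →₀ ℕ))
    (hG : ∀ g ∈ G, Minimal (fun v => monomial v (1 : K) ∈ J) g) :
    G.card ≤ mu J := by
  classical
  obtain ⟨s₀, hs₀⟩ := IsNoetherian.noetherian J
  refine le_csInf ⟨s₀.card, s₀, rfl, hs₀⟩ ?_
  rintro _ ⟨s, rfl, hs⟩
  let T : MvPolynomial (Fin n) K →ₗ[K] (G → K) := LinearMap.pi fun g => lcoeff K g.1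
  have hT : ∀ f ∈ J, T f ∈ Submodule.span K (T '' s) := by
    intro f hf
    rw [← hs] at hf
    induction hf using Submodule.span_induction with
    | mem f hf => exact Submodule.subset_span ⟨f, hf, rfl⟩
    | zero => simp
    | add f h _ _ hf hh => rw [map_add]; exact add_mem hf hh
    | smul p f hfJ hf =>
      replace hfJ : f ∈ J := hs ▸ hfJ
      have : T (p • f) = coeff 0 p • T f := by
        ext g
        exact hJ.coeff_mul_of_minimal hfJ (hG g g.2) p
      rw [this]
      exact Submodule.smul_mem _ _ hf
  have hspan : Submodule.span K (T '' s) = ⊤ := by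
    rw [eq_top_iff, ← (Pi.basisFun K G).span_eq, Submodule.span_le]
    rintro _ ⟨g, rfl⟩
    have : T (monomial g.1 1) = Pi.basisFun K G g := by
      ext j
      simp only [T, LinearMap.pi_apply, lcoeff_apply, coeff_monomial, Pi.basisFun_apply,
        Pi.single_apply, Subtype.ext_iff, eq_comm]
    exact this ▸ hT _ (hG g g.2).prop
  calc G.card = Module.finrank K (G → K) := by simp
    _ = (↑(s.image T) : Set (G → K)).finrank K := by
      rw [Set.finrank, Finset.coe_image, hspan, finrank_top]
    _ ≤ (s.image T).card := finrank_span_finset_le_card _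
    _ ≤ s.card := Finset.card_image_le

lemma IsMonomialIdeal.mu_eq_card (hJ : IsMonomialIdeal J) (G : Finset (Fin n →₀ ℕ))
    (hG : ∀ g ∈ G, Minimal (fun v => monomial v (1 : K) ∈ J) g)
    (hspan : Ideal.span ((fun v => monomial v (1 : K)) '' ↑G) = J) :
    mu J = G.card :=
  le_antisymm (mu_le_card_of_span_monomial G hspan) (hJ.card_le_mu G hG)

end MonomialIdeal

section TwoVariables

variable {K : Type*} [Field K] {I J : Ideal (MvPolynomial (Fin 2) K)}

noncomputable def xyExp (a b : ℕ) : Fin 2 →₀ ℕ := Finsupp.single 0 a + Finsupp.single 1 b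

@[simp] lemma xyExp_apply_zero (a b : ℕ) : xyExp a b 0 = a := by simp [xyExp]

@[simp] lemma xyExp_apply_one (a b : ℕ) : xyExp a b 1 = b := by simp [xyExp]

lemma xyExp_eq_self (v : Fin 2 →₀ ℕ) : xyExp (v 0) (v 1) = v := by
  ext i; fin_cases i <;> simp

lemma xyExp_le_xyExp_iff {a b c d : ℕ} : xyExp a b ≤ xyExp c d ↔ a ≤ c ∧ b ≤ d := by
  simp [Finsupp.le_def, Fin.forall_fin_two]

lemma xyExp_add_xyExp (a b c d : ℕ) : xyExp a b + xyExp c d = xyExp (a + c) (b + d) := by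
  ext i; fin_cases i <;> simp

lemma X_pow_mul_X_pow_eq_monomial_xyExp (a b : ℕ) :
    (X 0 : MvPolynomial (Fin 2) K) ^ a * X 1 ^ b = monomial (xyExp a b) 1 := by
  rw [X_pow_eq_monomial, X_pow_eq_monomial, monomial_mul, one_mul, xyExp]

lemma monomial_xyExp_mem_of_le {a b c d : ℕ} (h : monomial (xyExp a b) (1 : K) ∈ J)
    (hac : a ≤ c) (hbd : b ≤ d) : monomial (xyExp c d) (1 : K) ∈ J :=
  monomial_mem_of_le h (xyExp_le_xyExp_iff.mpr ⟨hac, hbd⟩)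

lemma IsMonomialIdeal.monomial_xyExp_mem_mul_iff (hI : IsMonomialIdeal I)
    (hJ : IsMonomialIdeal J) {a b : ℕ} :
    monomial (xyExp a b) (1 : K) ∈ I * J ↔ ∃ a₁ b₁ a₂ b₂,
      monomial (xyExp a₁ b₁) (1 : K) ∈ I ∧ monomial (xyExp a₂ b₂) (1 : K) ∈ J ∧
        a₁ + a₂ ≤ a ∧ b₁ + b₂ ≤ b := by
  rw [hI.monomial_mem_mul_iff hJ]
  constructor
  · rintro ⟨u, v, hu, hv, huv⟩
    rw [← xyExp_eq_self u, ← xyExp_eq_self v, xyExp_add_xyExp, xyExp_le_xyExp_iff] at huv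
    rw [← xyExp_eq_self u] at hu
    rw [← xyExp_eq_self v] at hv
    exact ⟨_, _, _, _, hu, hv, huv⟩
  · rintro ⟨a₁, b₁, a₂, b₂, hu, hv, ha, hb⟩
    exact ⟨_, _, hu, hv, by rw [xyExp_add_xyExp, xyExp_le_xyExp_iff]; exact ⟨ha, hb⟩⟩

/-- Strong stability with `x > y`: if `y` divides a monomial `u ∈ J`, then `x * u / y ∈ J`. -/
def IsStronglyStable (J : Ideal (MvPolynomial (Fin 2) K)) : Prop :=
  ∀ a b, monomial (xyExp a (b + 1)) (1 : K) ∈ J → monomial (xyExp (a + 1) b) (1 : K) ∈ J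

lemma IsLexsegmentIdeal.isStronglyStable (hI : IsLexsegmentIdeal I) : IsStronglyStable I := by
  intro a b h
  have := hI.2 a (b + 1) (a + 1) b (by omega) (by omega)
  simp only [X_pow_mul_X_pow_eq_monomial_xyExp] at this
  exact this h

lemma IsStronglyStable.monomial_xyExp_add_mem (hJ : IsStronglyStable J) {a b : ℕ} (j : ℕ)
    (h : monomial (xyExp a (b + j)) (1 : K) ∈ J) : monomial (xyExp (a + j) b) (1 : K) ∈ J := by
  induction j generalizing a with
  | zero => simpa using h
  | succ j ih =>
    rw [← add_assoc] at h
    simpa [add_assoc, add_comm 1 j] using ih (hJ _ _ h)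

lemma IsStronglyStable.mul (hI : IsStronglyStable I) (hJ : IsStronglyStable J)
    (hIm : IsMonomialIdeal I) (hJm : IsMonomialIdeal J) : IsStronglyStable (I * J) := by
  intro a b h
  rw [hIm.monomial_xyExp_mem_mul_iff hJm] at h ⊢
  obtain ⟨a₁, b₁, a₂, b₂, h₁, h₂, ha, hb⟩ := h
  rcases b₁ with _ | b₁
  · rcases b₂ with _ | b₂
    · exact ⟨a₁, 0, a₂, 0, h₁, h₂, by omega, by omega⟩
    · exact ⟨a₁, 0, a₂ + 1, b₂, h₁, hJ _ _ h₂, by omega, by omega⟩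
  · exact ⟨a₁ + 1, b₁, a₂, b₂, hI _ _ h₁, h₂, by omega, by omega⟩

def xDegrees (J : Ideal (MvPolynomial (Fin 2) K)) : Set ℕ :=
  {a | ∃ b, monomial (xyExp a b) (1 : K) ∈ J}

def pureXDegrees (J : Ideal (MvPolynomial (Fin 2) K)) : Set ℕ :=
  {a | monomial (xyExp a 0) (1 : K) ∈ J}

lemma IsStronglyStable.exists_isLeast (hJ : IsStronglyStable J) (hJm : IsMonomialIdeal J)
    (h0 : J ≠ ⊥) : ∃ k A, IsLeast (xDegrees J) k ∧ IsLeast (pureXDegrees J) A := by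
  obtain ⟨f, hf, hf0⟩ := Submodule.exists_mem_ne_zero_of_ne_bot h0
  obtain ⟨v, hv⟩ := support_nonempty.mpr hf0
  have hv : monomial (xyExp (v 0) (v 1)) (1 : K) ∈ J := by
    rw [xyExp_eq_self]; exact hJm.monomial_mem_of_mem_support hf hv
  have hx : (xDegrees J).Nonempty := ⟨v 0, v 1, hv⟩
  have hpx : (pureXDegrees J).Nonempty :=
    ⟨v 0 + v 1, hJ.monomial_xyExp_add_mem (v 1) (by simpa using hv)⟩
  exact ⟨_, _, ⟨Nat.sInf_mem hx, fun _ => Nat.sInf_le⟩,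
    ⟨Nat.sInf_mem hpx, fun _ => Nat.sInf_le⟩⟩

lemma isLeast_xDegrees_mul (hIm : IsMonomialIdeal I) (hJm : IsMonomialIdeal J) {k₁ k₂ : ℕ}
    (hI : IsLeast (xDegrees I) k₁) (hJ : IsLeast (xDegrees J) k₂) :
    IsLeast (xDegrees (I * J)) (k₁ + k₂) := by
  obtain ⟨⟨b₁, h₁⟩, hI⟩ := hI
  obtain ⟨⟨b₂, h₂⟩, hJ⟩ := hJ
  refine ⟨⟨b₁ + b₂, ?_⟩, ?_⟩
  · simpa [xyExp_add_xyExp, monomial_mul] using Ideal.mul_mem_mul h₁ h₂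
  · rintro a ⟨b, h⟩
    obtain ⟨a₁, b₁, a₂, b₂, h₁, h₂, ha, -⟩ :=
      (hIm.monomial_xyExp_mem_mul_iff hJm).mp h
    have := hI ⟨b₁, h₁⟩
    have := hJ ⟨b₂, h₂⟩
    omega

lemma isLeast_pureXDegrees_mul (hIm : IsMonomialIdeal I) (hJm : IsMonomialIdeal J)
    {A₁ A₂ : ℕ} (hI : IsLeast (pureXDegrees I) A₁) (hJ : IsLeast (pureXDegrees J) A₂) :
    IsLeast (pureXDegrees (I * J)) (A₁ + A₂) := by
  obtain ⟨h₁, hI⟩ := hI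
  obtain ⟨h₂, hJ⟩ := hJ
  refine ⟨?_, ?_⟩
  · simpa [pureXDegrees, xyExp_add_xyExp, monomial_mul] using Ideal.mul_mem_mul h₁ h₂
  · intro a h
    obtain ⟨a₁, b₁, a₂, b₂, h₁, h₂, ha, hb⟩ :=
      (hIm.monomial_xyExp_mem_mul_iff hJm).mp h
    obtain rfl : b₁ = 0 := by omega
    obtain rfl : b₂ = 0 := by omega
    have := hI h₁
    have := hJ h₂
    omega

noncomputable def minYDegree (J : Ideal (MvPolynomial (Fin 2) K)) (a : ℕ) : ℕ :=
  sInf {b | monomial (xyExp a b) (1 : K) ∈ J}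

lemma monomial_xyExp_minYDegree_mem {a b : ℕ} (h : monomial (xyExp a b) (1 : K) ∈ J) :
    monomial (xyExp a (minYDegree J a)) (1 : K) ∈ J :=
  Nat.sInf_mem (s := {b | monomial (xyExp a b) (1 : K) ∈ J}) ⟨b, h⟩

lemma minYDegree_le {a b : ℕ} (h : monomial (xyExp a b) (1 : K) ∈ J) : minYDegree J a ≤ b :=
  Nat.sInf_le h

lemma IsStronglyStable.minimal_xyExp_minYDegree (hJ : IsStronglyStable J) {A : ℕ}
    (hA : IsLeast (pureXDegrees J) A) {a : ℕ} (haA : a ≤ A) (ha : a ∈ xDegrees J) :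
    Minimal (fun v => monomial v (1 : K) ∈ J) (xyExp a (minYDegree J a)) := by
  obtain ⟨b, hb⟩ := ha
  refine ⟨monomial_xyExp_minYDegree_mem hb, fun w hw hwle => ?_⟩
  obtain ⟨c, d, rfl⟩ : ∃ c d, w = xyExp c d := ⟨_, _, (xyExp_eq_self w).symm⟩
  rw [xyExp_le_xyExp_iff] at hwle ⊢
  obtain hca | rfl := hwle.1.lt_or_eq
  · rcases d with _ | d
    · have := hA.2 hw
      omega
    · have := minYDegree_le (monomial_xyExp_mem_of_le (hJ _ _ hw) hca le_rfl)
      omega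
  · exact ⟨le_rfl, minYDegree_le hw⟩

lemma exists_mem_Icc_xyExp_minYDegree_le {k A c d : ℕ} (hk : IsLeast (xDegrees J) k)
    (hA : IsLeast (pureXDegrees J) A) (h : monomial (xyExp c d) (1 : K) ∈ J) :
    ∃ a ∈ Finset.Icc k A, xyExp a (minYDegree J a) ≤ xyExp c d := by
  have hkA : k ≤ A := hk.2 ⟨0, hA.1⟩
  refine ⟨min c A, Finset.mem_Icc.mpr ⟨le_min (hk.2 ⟨d, h⟩) hkA, min_le_right _ _⟩,
    xyExp_le_xyExp_iff.mpr ⟨min_le_left _ _, ?_⟩⟩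
  rcases le_total c A with hcA | hAc
  · rw [min_eq_left hcA]
    exact minYDegree_le h
  · rw [min_eq_right hAc, Nat.le_zero.mp (minYDegree_le hA.1)]
    exact Nat.zero_le _

lemma IsStronglyStable.mu_eq (hJ : IsStronglyStable J) (hJm : IsMonomialIdeal J) {k A : ℕ}
    (hk : IsLeast (xDegrees J) k) (hA : IsLeast (pureXDegrees J) A) :
    mu J = A + 1 - k := by
  classical
  have hcol : ∀ a, k ≤ a → a ∈ xDegrees J := fun a hka =>
    let ⟨b, hb⟩ := hk.1; ⟨b, monomial_xyExp_mem_of_le hb hka le_rfl⟩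
  set G := (Finset.Icc k A).image fun a => xyExp a (minYDegree J a)
  have hG : ∀ g ∈ G, Minimal (fun v => monomial v (1 : K) ∈ J) g := by
    simp only [G, Finset.mem_image, Finset.mem_Icc]
    rintro _ ⟨a, ⟨hka, haA⟩, rfl⟩
    exact hJ.minimal_xyExp_minYDegree hA haA (hcol a hka)
  have hspan : Ideal.span ((fun v => monomial v (1 : K)) '' ↑G) = J := by
    refine le_antisymm (Ideal.span_le.mpr ?_) ?_
    · rintro _ ⟨g, hg, rfl⟩
      exact (hG g hg).prop
    rw [hJm.eq_span_monomial, Ideal.span_le]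
    rintro _ ⟨v, hv, rfl⟩
    obtain ⟨c, d, rfl⟩ : ∃ c d, v = xyExp c d := ⟨_, _, (xyExp_eq_self v).symm⟩
    obtain ⟨a, ha, hle⟩ := exists_mem_Icc_xyExp_minYDegree_le hk hA hv
    exact monomial_mem_of_le (Ideal.subset_span ⟨_, Finset.mem_image_of_mem _ ha, rfl⟩) hle
  rw [hJm.mu_eq_card G hG hspan, Finset.card_image_of_injective _ fun a a' h => by
    simpa using congrArg (· 0) h, Nat.card_Icc]

lemma IsStronglyStable.mu_mul (hI : IsStronglyStable I) (hJ : IsStronglyStable J)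
    (hIm : IsMonomialIdeal I) (hJm : IsMonomialIdeal J) (hI0 : I ≠ ⊥) (hJ0 : J ≠ ⊥) :
    mu (I * J) = mu I + mu J - 1 := by
  obtain ⟨k₁, A₁, hk₁, hA₁⟩ := hI.exists_isLeast hIm hI0
  obtain ⟨k₂, A₂, hk₂, hA₂⟩ := hJ.exists_isLeast hJm hJ0
  have h₁ : k₁ ≤ A₁ := hk₁.2 ⟨0, hA₁.1⟩
  have h₂ : k₂ ≤ A₂ := hk₂.2 ⟨0, hA₂.1⟩
  rw [(hI.mul hJ hIm hJm).mu_eq (hIm.mul hJm) (isLeast_xDegrees_mul hIm hJm hk₁ hk₂)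
      (isLeast_pureXDegrees_mul hIm hJm hA₁ hA₂),
    hI.mu_eq hIm hk₁ hA₁, hJ.mu_eq hJm hk₂ hA₂]
  omega

end TwoVariables

/-- Corollary 4.8: if `I ⊂ K[x,y]` is a lexsegment ideal, then `μ(I²) = 2μ(I) - 1`. -/
theorem numGen_square_of_lexsegment {K : Type*} [Field K]
    (I : Ideal (MvPolynomial (Fin 2) K)) (hI : IsLexsegmentIdeal I) :
    mu (I ^ 2) = 2 * mu I - 1 := by
  rcases eq_or_ne I ⊥ with rfl | h0
  · simp [mu_bot]
  have hs := hI.isStronglyStable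
  rw [pow_two, hs.mu_mul hs hI.1 hI.1 h0 h0]
  omega
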